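/- Let d ≥ 1, 0 < α ≤ π, and 0 < ε < α, and let X ⊆ S^d be a finite (ε/4)-net of S^d. Suppose y ∈ S^d and x_0, x_1, …, x_k ∈ X satisfy d(x_i, y) ≤ ε/4 for all i. Then there exists z ∈ X with z ∉ {x_0, …, x_k} such that α − ε ≤ d(x_i, z) ≤ α + ε for all i = 0, …, k. -/

import Mathlib

open scoped RealInnerProductSpace

/-- Geodesic distance `arccos ⟨x, y⟩` on the unit sphere in `ℝ^n`. -/
noncomputable def gd {n : ℕ} (x y : EuclideanSpace ℝ (Fin n)) : ℝ :=
  Real.arccos (inner ℝ x y : ℝ)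

lemma gd_comm {n : ℕ} (x y : EuclideanSpace ℝ (Fin n)) : gd x y = gd y x := by
  rw [gd, gd, real_inner_comm]

/-- The unit sphere `S^d ⊆ ℝ^{d+1}`. -/
noncomputable def unitSphere (d : ℕ) : Set (EuclideanSpace ℝ (Fin (d + 1))) :=
  Metric.sphere 0 1

/-- `X` is an `r`-net of `S^d`: every point of the sphere is within geodesic
distance `r` of a point of `X`. -/
def IsNet (d : ℕ) (r : ℝ) (X : Set (EuclideanSpace ℝ (Fin (d + 1)))) : Prop :=
  ∀ y ∈ unitSphere d, ∃ x ∈ X, gd x y ≤ r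

/-- The ε-distance graph with parameter α on a set `X ⊆ ℝ^n`: distinct points are
adjacent iff their geodesic distance lies in `[α - ε, α + ε]`. -/
noncomputable def distGraph {n : ℕ} (X : Set (EuclideanSpace ℝ (Fin n))) (α ε : ℝ) :
    SimpleGraph X where
  Adj x y := x ≠ y ∧ α - ε ≤ gd x.1 y.1 ∧ gd x.1 y.1 ≤ α + ε
  symm := ⟨by
    intro x y h
    exact ⟨h.1.symm, by rw [gd_comm]; exact h.2.1, by rw [gd_comm]; exact h.2.2⟩⟩
  loopless := ⟨fun x h => h.1 rfl⟩

/-!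
Choose `w` on the sphere with `d(y, w) = α` (the sphere is connected, so `d(y, ·)` takes every
value in `[0, π]`), and `z ∈ X` with `d(z, w) ≤ ε/4`. By the triangle inequality `d(x_i, z)`
differs from `d(y, w) = α` by at most `d(x_i, y) + d(z, w) ≤ ε/2`; in particular it is positive,
so `z ≠ x_i`.
-/

section UnitVectors

variable {n : ℕ} {x y z w : EuclideanSpace ℝ (Fin n)}

lemma gd_eq_angle (hx : ‖x‖ = 1) (hy : ‖y‖ = 1) : gd x y = InnerProductGeometry.angle x y := by
  simp [gd, InnerProductGeometry.angle, hx, hy]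

lemma gd_self (hx : ‖x‖ = 1) : gd x x = 0 := by
  simp [gd, hx]

lemma gd_le_gd_add_gd (hx : ‖x‖ = 1) (hy : ‖y‖ = 1) (hz : ‖z‖ = 1) :
    gd x z ≤ gd x y + gd y z := by
  rw [gd_eq_angle hx hz, gd_eq_angle hx hy, gd_eq_angle hy hz]
  exact InnerProductGeometry.angle_le_angle_add_angle x y z

lemma abs_gd_sub_gd_le (hx : ‖x‖ = 1) (hy : ‖y‖ = 1) (hz : ‖z‖ = 1) (hw : ‖w‖ = 1) :
    |gd x z - gd y w| ≤ gd x y + gd z w := by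
  rw [abs_le]
  constructor <;> linarith [gd_le_gd_add_gd hx hy hz, gd_le_gd_add_gd hy hw hz,
    gd_le_gd_add_gd hy hx hz, gd_le_gd_add_gd hy hz hw, gd_comm x y, gd_comm z w]

end UnitVectors

lemma exists_gd_eq {n : ℕ} (hn : 1 < n) {y : EuclideanSpace ℝ (Fin n)} (hy : ‖y‖ = 1) {α : ℝ}
    (hα : α ∈ Set.Icc 0 Real.pi) : ∃ w, ‖w‖ = 1 ∧ gd y w = α := by
  have hrank : 1 < Module.rank ℝ (EuclideanSpace ℝ (Fin n)) := by
    rw [← Module.finrank_eq_rank, finrank_euclideanSpace_fin]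
    exact_mod_cast hn
  have hconn : IsConnected (Metric.sphere (0 : EuclideanSpace ℝ (Fin n)) 1) :=
    isConnected_sphere hrank 0 zero_le_one
  have hcont : ContinuousOn (gd y) (Metric.sphere 0 1) := by
    unfold gd; fun_prop
  have hyneg : gd y (-y) = Real.pi := by
    simp [gd, hy]
  obtain ⟨w, hw, hwα⟩ := hconn.isPreconnected.intermediate_value (a := y) (b := -y)
    (by simpa using hy) (by simpa using hy) hcont (by rwa [gd_self hy, hyneg])
  exact ⟨w, by simpa using hw, hwα⟩

theorem stmt_8_general (d k : ℕ) (hd : 1 ≤ d) (α ε : ℝ) (hα0 : 0 < α) (hαπ : α ≤ Real.pi)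
    (hε0 : 0 < ε) (hεα : ε < α)
    (X : Set (EuclideanSpace ℝ (Fin (d + 1)))) (hXS : X ⊆ unitSphere d)
    (hnet : IsNet d (ε / 4) X)
    (y : EuclideanSpace ℝ (Fin (d + 1))) (hy : y ∈ unitSphere d)
    (x : Fin (k + 1) → EuclideanSpace ℝ (Fin (d + 1))) (hx : ∀ i, x i ∈ X)
    (hclose : ∀ i, gd (x i) y ≤ ε / 4) :
    ∃ z ∈ X, (∀ i, z ≠ x i) ∧ ∀ i, α - ε ≤ gd (x i) z ∧ gd (x i) z ≤ α + ε := by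
  have hunit : ∀ {v}, v ∈ unitSphere d → ‖v‖ = 1 := fun hv => by simpa [unitSphere] using hv
  obtain ⟨w, hw, hyw⟩ := exists_gd_eq (by omega) (hunit hy) ⟨hα0.le, hαπ⟩
  obtain ⟨z, hzX, hzw⟩ := hnet w (by simpa [unitSphere] using hw)
  have hdist : ∀ i, |gd (x i) z - α| ≤ ε / 2 := fun i => by
    have := abs_gd_sub_gd_le (hunit (hXS (hx i))) (hunit hy) (hunit (hXS hzX)) hw
    rw [hyw] at this
    linarith [hclose i]
  refine ⟨z, hzX, fun i hzi => ?_, fun i => ⟨?_, ?_⟩⟩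
  · have := hdist i
    rw [hzi, gd_self (hunit (hXS (hx i)))] at this
    linarith [(abs_le.mp this).1]
  all_goals linarith [abs_le.mp (hdist i)]

/-- if `x_0, …, x_k ∈ X` all lie within `ε/4` of some `y ∈ S^d`, where `X` is a
finite `(ε/4)`-net, then some `z ∈ X` distinct from all `x_i` satisfies
`α - ε ≤ d(x_i, z) ≤ α + ε` for all `i`. -/
theorem stmt_8 (d k : ℕ) (hd : 1 ≤ d) (α ε : ℝ) (hα0 : 0 < α) (hαπ : α ≤ Real.pi)
    (hε0 : 0 < ε) (hεα : ε < α)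
    (X : Set (EuclideanSpace ℝ (Fin (d + 1)))) (hXS : X ⊆ unitSphere d)
    (hXfin : X.Finite) (hnet : IsNet d (ε / 4) X)
    (y : EuclideanSpace ℝ (Fin (d + 1))) (hy : y ∈ unitSphere d)
    (x : Fin (k + 1) → EuclideanSpace ℝ (Fin (d + 1))) (hx : ∀ i, x i ∈ X)
    (hclose : ∀ i, gd (x i) y ≤ ε / 4) :
    ∃ z ∈ X, (∀ i, z ≠ x i) ∧ ∀ i, α - ε ≤ gd (x i) z ∧ gd (x i) z ≤ α + ε :=
  stmt_8_general d k hd α ε hα0 hαπ hε0 hεα X hXS hnet y hy x hx hclose
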